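/- Let Q be symmetric positive definite, J : ℝⁿ → ℝ^{n×n} continuous with J(z)ᵀ = -J(z), suppose z ↦ J(z)Q is Lipschitz with constant L w.r.t. the Q-norm, and suppose y₁ satisfies y₁ = C((h/2)J((y₀+y₁)/2)Q)y₀. Then for any x ∈ ℝⁿ the Cayley iterate w = C((h/2)J((y₀+x)/2)Q)y₀ satisfies ‖w - y₁‖_Q ≤ (hL‖y₀‖_Q/2)·‖x - y₁‖_Q, and ‖w‖_Q = ‖y₀‖_Q. -/

import Mathlib

/-!
For a `Q`-skew matrix `A` (`Aᵀ Q = -Q A`), the vectors `v` and `A v` are `Q`-orthogonal, so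
`‖(1 ± A) v‖_Q² = ‖v‖_Q² + ‖A v‖_Q²`. Hence `1 - A` is invertible, `(1 - A)⁻¹` is a
`Q`-contraction and `C(A) = (1 + A)(1 - A)⁻¹` is a `Q`-isometry. Writing `C(A) = 2 (1 - A)⁻¹ - 1`
gives `C(A) - C(B) = 2 (1 - A)⁻¹ (A - B) (1 - B)⁻¹`, so `C` is `2`-Lipschitz on `Q`-skew matrices.
For the iterate, `A - B = (h/2)(J(z) Q - J(z₁) Q)` with midpoints `z`, `z₁` at `Q`-distance
`‖x - y₁‖_Q / 2`, and the Lipschitz bound on `J·Q` finishes the estimate.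
-/

open Matrix

/-- The `Q`-norm of a vector, `‖x‖_Q = √(xᵀ Q x)`. -/
noncomputable def qnorm {n : ℕ} (Q : Matrix (Fin n) (Fin n) ℝ) (x : Fin n → ℝ) : ℝ :=
  Real.sqrt (x ⬝ᵥ Q.mulVec x)

/-- The operator norm on `ℝ^{n×n}` induced by the `Q`-norm. -/
noncomputable def qOpNorm {n : ℕ} (Q M : Matrix (Fin n) (Fin n) ℝ) : ℝ :=
  sInf {c : ℝ | 0 ≤ c ∧ ∀ x : Fin n → ℝ, qnorm Q (M.mulVec x) ≤ c * qnorm Q x}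

/-- The Cayley transform `C(A) = (I - A)⁻¹ (I + A)`. -/
noncomputable def cayley {n : ℕ} (A : Matrix (Fin n) (Fin n) ℝ) : Matrix (Fin n) (Fin n) ℝ :=
  (1 - A)⁻¹ * (1 + A)

/-- The midpoint-rule fixed point map `Φ_h(x) = C((h/2) J((y₀+x)/2) Q) y₀`. -/
noncomputable def Phi {n : ℕ} (Q : Matrix (Fin n) (Fin n) ℝ)
    (J : (Fin n → ℝ) → Matrix (Fin n) (Fin n) ℝ) (y₀ : Fin n → ℝ) (h : ℝ)
    (x : Fin n → ℝ) : Fin n → ℝ :=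
  (cayley ((h / 2) • (J ((1 / 2 : ℝ) • (y₀ + x)) * Q))).mulVec y₀

section SkewAdjoint

variable {ι : Type*} {Q A : Matrix ι ι ℝ}

lemma Matrix.PosDef.isSymm (hQ : Q.PosDef) : Q.IsSymm :=
  isHermitian_iff_isSymm.mp hQ.isHermitian

variable [Fintype ι]

lemma Matrix.PosDef.dotProduct_mulVec_self_nonneg (hQ : Q.PosDef) (x : ι → ℝ) :
    0 ≤ x ⬝ᵥ Q *ᵥ x := by
  simpa using hQ.posSemidef.dotProduct_mulVec_nonneg x

lemma Matrix.IsSymm.dotProduct_mulVec_comm (hQ : Q.IsSymm) (x y : ι → ℝ) :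
    x ⬝ᵥ Q *ᵥ y = y ⬝ᵥ Q *ᵥ x := by
  rw [dotProduct_mulVec, ← mulVec_transpose, hQ.eq, dotProduct_comm]

lemma Matrix.IsSkewAdjoint.neg {R : Type*} [CommRing R] {Q A : Matrix ι ι R}
    (hA : Q.IsSkewAdjoint A) : Q.IsSkewAdjoint (-A) := by
  unfold Matrix.IsSkewAdjoint Matrix.IsAdjointPair at *
  rw [transpose_neg, Matrix.neg_mul, hA, neg_neg, Matrix.mul_neg, neg_neg]

lemma isSkewAdjoint_smul_mul (hQ : Q.IsSymm) {S : Matrix ι ι ℝ} (hS : Sᵀ = -S) (c : ℝ) :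
    Q.IsSkewAdjoint (c • (S * Q)) := by
  unfold Matrix.IsSkewAdjoint Matrix.IsAdjointPair
  rw [transpose_smul, transpose_mul, hQ.eq, hS]
  simp only [Matrix.smul_mul, Matrix.mul_smul, Matrix.mul_neg, Matrix.neg_mul, Matrix.mul_assoc,
    smul_neg]

lemma dotProduct_mulVec_skewAdjoint_mulVec_self (hQ : Q.IsSymm) (hA : Q.IsSkewAdjoint A)
    (v : ι → ℝ) : v ⬝ᵥ Q *ᵥ (A *ᵥ v) = 0 := by
  have hskew : (A *ᵥ v) ⬝ᵥ Q *ᵥ v = -(v ⬝ᵥ Q *ᵥ (A *ᵥ v)) := by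
    rw [dotProduct_mulVec, vecMul_mulVec, ← dotProduct_mulVec, hA, Matrix.mul_neg, neg_mulVec,
      dotProduct_neg, mulVec_mulVec]
  linarith [hQ.dotProduct_mulVec_comm (A *ᵥ v) v]

lemma dotProduct_one_add_mulVec_self [DecidableEq ι] (hQ : Q.IsSymm) (hA : Q.IsSkewAdjoint A)
    (v : ι → ℝ) :
    ((1 + A) *ᵥ v) ⬝ᵥ Q *ᵥ ((1 + A) *ᵥ v) = v ⬝ᵥ Q *ᵥ v + (A *ᵥ v) ⬝ᵥ Q *ᵥ (A *ᵥ v) := by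
  have hvAv := dotProduct_mulVec_skewAdjoint_mulVec_self hQ hA v
  have hAvv : (A *ᵥ v) ⬝ᵥ Q *ᵥ v = 0 := by rw [hQ.dotProduct_mulVec_comm, hvAv]
  rw [add_mulVec, one_mulVec, mulVec_add, dotProduct_add, add_dotProduct, add_dotProduct, hvAv,
    hAvv]
  ring

lemma dotProduct_mulVec_self_le_one_sub [DecidableEq ι] (hQ : Q.PosDef) (hA : Q.IsSkewAdjoint A)
    (v : ι → ℝ) :
    v ⬝ᵥ Q *ᵥ v ≤ ((1 - A) *ᵥ v) ⬝ᵥ Q *ᵥ ((1 - A) *ᵥ v) := by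
  rw [sub_eq_add_neg, dotProduct_one_add_mulVec_self hQ.isSymm hA.neg]
  linarith [hQ.dotProduct_mulVec_self_nonneg (-A *ᵥ v)]

lemma isUnit_det_one_sub_of_isSkewAdjoint [DecidableEq ι] (hQ : Q.PosDef)
    (hA : Q.IsSkewAdjoint A) : IsUnit (1 - A).det := by
  rw [← Matrix.isUnit_iff_isUnit_det, ← Matrix.mulVec_injective_iff_isUnit,
    ← (1 - A).coe_mulVecLin, injective_iff_map_eq_zero]
  intro v hv
  by_contra hv0
  have hpos : 0 < v ⬝ᵥ Q *ᵥ v := by simpa using hQ.dotProduct_mulVec_pos hv0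
  have hle := dotProduct_mulVec_self_le_one_sub hQ hA v
  rw [mulVecLin_apply] at hv
  rw [hv, zero_dotProduct] at hle
  linarith

end SkewAdjoint

variable {n : ℕ} {Q A B : Matrix (Fin n) (Fin n) ℝ}

lemma qnorm_nonneg (Q : Matrix (Fin n) (Fin n) ℝ) (x : Fin n → ℝ) : 0 ≤ qnorm Q x :=
  Real.sqrt_nonneg _

lemma qnorm_smul (Q : Matrix (Fin n) (Fin n) ℝ) (c : ℝ) (x : Fin n → ℝ) :
    qnorm Q (c • x) = |c| * qnorm Q x := by
  rw [qnorm, qnorm, smul_dotProduct, mulVec_smul, dotProduct_smul, smul_eq_mul, smul_eq_mul,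
    ← mul_assoc, ← sq, Real.sqrt_mul (sq_nonneg c), Real.sqrt_sq_eq_abs]

lemma qnorm_one_add_mulVec_eq_one_sub (hQ : Q.IsSymm) (hA : Q.IsSkewAdjoint A)
    (v : Fin n → ℝ) : qnorm Q ((1 + A) *ᵥ v) = qnorm Q ((1 - A) *ᵥ v) := by
  rw [qnorm, qnorm, sub_eq_add_neg, dotProduct_one_add_mulVec_self hQ hA,
    dotProduct_one_add_mulVec_self hQ hA.neg, neg_mulVec, mulVec_neg, neg_dotProduct,
    dotProduct_neg, neg_neg]

lemma qnorm_inv_one_sub_mulVec_le (hQ : Q.PosDef) (hA : Q.IsSkewAdjoint A) (w : Fin n → ℝ) :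
    qnorm Q ((1 - A)⁻¹ *ᵥ w) ≤ qnorm Q w := by
  have hw : (1 - A) *ᵥ ((1 - A)⁻¹ *ᵥ w) = w := by
    rw [mulVec_mulVec, mul_nonsing_inv _ (isUnit_det_one_sub_of_isSkewAdjoint hQ hA), one_mulVec]
  have h := Real.sqrt_le_sqrt (dotProduct_mulVec_self_le_one_sub hQ hA ((1 - A)⁻¹ *ᵥ w))
  rwa [hw] at h

lemma cayley_eq_two_smul_inv_sub_one (hA : IsUnit (1 - A).det) :
    cayley A = (2 : ℝ) • (1 - A)⁻¹ - 1 := by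
  have h : 1 + A = (2 : ℝ) • 1 - (1 - A) := by rw [two_smul]; abel
  rw [cayley, h, Matrix.mul_sub, nonsing_inv_mul _ hA, Matrix.mul_smul, mul_one]

lemma cayley_sub_cayley (hA : IsUnit (1 - A).det) (hB : IsUnit (1 - B).det) :
    cayley A - cayley B = (2 : ℝ) • ((1 - A)⁻¹ * (A - B) * (1 - B)⁻¹) := by
  have hAB : IsUnit (1 - A) ↔ IsUnit (1 - B) := by
    simp only [isUnit_iff_isUnit_det, hA, hB]
  rw [cayley_eq_two_smul_inv_sub_one hA, cayley_eq_two_smul_inv_sub_one hB,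
    sub_sub_sub_cancel_right, ← smul_sub, inv_sub_inv hAB, sub_sub_sub_cancel_left]

lemma qnorm_cayley_mulVec (hQ : Q.PosDef) (hA : Q.IsSkewAdjoint A) (v : Fin n → ℝ) :
    qnorm Q (cayley A *ᵥ v) = qnorm Q v := by
  have hdet := isUnit_det_one_sub_of_isSkewAdjoint hQ hA
  set u := (1 - A)⁻¹ *ᵥ v
  have hv : v = (1 - A) *ᵥ u := by
    rw [mulVec_mulVec, mul_nonsing_inv _ hdet, one_mulVec]
  have hC : cayley A *ᵥ v = (1 + A) *ᵥ u := by
    rw [cayley_eq_two_smul_inv_sub_one hdet, sub_mulVec, smul_mulVec, one_mulVec]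
    nth_rw 2 [hv]
    rw [sub_mulVec, add_mulVec, one_mulVec, two_smul]
    abel
  rw [hC, qnorm_one_add_mulVec_eq_one_sub hQ.isSymm hA, ← hv]

lemma LinearMap.exists_bound_of_finiteDimensional {E : Type*} [NormedAddCommGroup E]
    [NormedSpace ℝ E] [FiniteDimensional ℝ E] (f : E →ₗ[ℝ] E) :
    ∃ C, 0 ≤ C ∧ ∀ x, ‖f x‖ ≤ C * ‖x‖ :=
  let ⟨C, hC, hbound⟩ := ContinuousLinearMap.bound ⟨f, f.continuous_of_finiteDimensional⟩
  ⟨C, hC.le, hbound⟩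

/- `qnorm Q` is the norm of `Matrix.toNormedAddCommGroup Q hQ`; since `Fin n → ℝ` already carries
the sup norm, that instance has to be passed explicitly. -/
lemma exists_qnorm_mulVec_le (hQ : Q.PosDef) (M : Matrix (Fin n) (Fin n) ℝ) :
    ∃ C, 0 ≤ C ∧ ∀ x, qnorm Q (M *ᵥ x) ≤ C * qnorm Q x := by
  let normQ := Matrix.toNormedAddCommGroup Q hQ
  have hnorm : ∀ x : Fin n → ℝ, @norm _ normQ.toNorm x = qnorm Q x := fun x => by
    change Real.sqrt (RCLike.re ((Q *ᵥ x) ⬝ᵥ star x)) = _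
    simp [qnorm, dotProduct_comm]
  obtain ⟨C, hC, hbound⟩ := @LinearMap.exists_bound_of_finiteDimensional _ normQ
    (Matrix.toInnerProductSpace Q hQ.posSemidef).toNormedSpace _ M.mulVecLin
  exact ⟨C, hC, fun x => by simpa [hnorm] using hbound x⟩

lemma qOpNorm_nonneg (hQ : Q.PosDef) (M : Matrix (Fin n) (Fin n) ℝ) : 0 ≤ qOpNorm Q M :=
  le_csInf (exists_qnorm_mulVec_le hQ M) fun _ hc => hc.1

lemma qnorm_mulVec_le_qOpNorm_mul (hQ : Q.PosDef) (M : Matrix (Fin n) (Fin n) ℝ)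
    (v : Fin n → ℝ) : qnorm Q (M *ᵥ v) ≤ qOpNorm Q M * qnorm Q v := by
  rcases eq_or_ne v 0 with rfl | hv
  · simp [qnorm]
  · have hpos : 0 < qnorm Q v :=
      Real.sqrt_pos.mpr (by simpa using hQ.dotProduct_mulVec_pos hv)
    rw [← div_le_iff₀ hpos]
    exact le_csInf (exists_qnorm_mulVec_le hQ M) fun c hc => (div_le_iff₀ hpos).mpr (hc.2 v)

lemma qOpNorm_smul_le (hQ : Q.PosDef) (c : ℝ) (M : Matrix (Fin n) (Fin n) ℝ) :
    qOpNorm Q (c • M) ≤ |c| * qOpNorm Q M := by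
  refine csInf_le ⟨0, fun _ hd => hd.1⟩ ⟨by positivity [qOpNorm_nonneg hQ M], fun x => ?_⟩
  rw [smul_mulVec, qnorm_smul, mul_assoc]
  exact mul_le_mul_of_nonneg_left (qnorm_mulVec_le_qOpNorm_mul hQ M x) (abs_nonneg c)

lemma qnorm_cayley_sub_cayley_mulVec_le (hQ : Q.PosDef) (hA : Q.IsSkewAdjoint A)
    (hB : Q.IsSkewAdjoint B) (v : Fin n → ℝ) :
    qnorm Q ((cayley A - cayley B) *ᵥ v) ≤ 2 * qOpNorm Q (A - B) * qnorm Q v := by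
  rw [cayley_sub_cayley (isUnit_det_one_sub_of_isSkewAdjoint hQ hA)
    (isUnit_det_one_sub_of_isSkewAdjoint hQ hB), smul_mulVec, qnorm_smul, abs_two,
    ← mulVec_mulVec, ← mulVec_mulVec, mul_assoc]
  gcongr
  calc qnorm Q ((1 - A)⁻¹ *ᵥ (A - B) *ᵥ (1 - B)⁻¹ *ᵥ v)
      ≤ qnorm Q ((A - B) *ᵥ (1 - B)⁻¹ *ᵥ v) := qnorm_inv_one_sub_mulVec_le hQ hA _
    _ ≤ qOpNorm Q (A - B) * qnorm Q ((1 - B)⁻¹ *ᵥ v) := qnorm_mulVec_le_qOpNorm_mul hQ _ _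
    _ ≤ qOpNorm Q (A - B) * qnorm Q v := by
        gcongr
        · exact qOpNorm_nonneg hQ _
        · exact qnorm_inv_one_sub_mulVec_le hQ hB v

theorem stmt19_general {n : ℕ} (Q : Matrix (Fin n) (Fin n) ℝ) (hQ : Q.PosDef)
    (J : (Fin n → ℝ) → Matrix (Fin n) (Fin n) ℝ)
    (hJ : ∀ z, (J z)ᵀ = -(J z))
    (L : ℝ)
    (hLip : ∀ z z' : Fin n → ℝ,
      qOpNorm Q (J z * Q - J z' * Q) ≤ L * qnorm Q (z - z'))
    (y₀ y₁ : Fin n → ℝ) (h : ℝ) (hh : 0 < h)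
    (hy₁ : y₁ = Phi Q J y₀ h y₁) :
    ∀ x : Fin n → ℝ,
      qnorm Q (Phi Q J y₀ h x - y₁) ≤ (h * L * qnorm Q y₀ / 2) * qnorm Q (x - y₁) ∧
      qnorm Q (Phi Q J y₀ h x) = qnorm Q y₀ := by
  intro x
  set z : Fin n → ℝ := (1 / 2 : ℝ) • (y₀ + x)
  set z₁ : Fin n → ℝ := (1 / 2 : ℝ) • (y₀ + y₁)
  have hskew : ∀ w, Q.IsSkewAdjoint ((h / 2) • (J w * Q)) :=
    fun w => isSkewAdjoint_smul_mul hQ.isSymm (hJ w) (h / 2)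
  have hmid : qnorm Q (z - z₁) = qnorm Q (x - y₁) / 2 := by
    rw [← smul_sub, add_sub_add_left_eq_sub, qnorm_smul]
    norm_num
    ring
  refine ⟨?_, qnorm_cayley_mulVec hQ (hskew z) y₀⟩
  calc qnorm Q (Phi Q J y₀ h x - y₁)
      = qnorm Q ((cayley ((h / 2) • (J z * Q)) - cayley ((h / 2) • (J z₁ * Q))) *ᵥ y₀) := by
        rw [sub_mulVec]; nth_rw 1 [hy₁]; rfl
    _ ≤ 2 * qOpNorm Q ((h / 2) • (J z * Q - J z₁ * Q)) * qnorm Q y₀ := by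
        rw [smul_sub]; exact qnorm_cayley_sub_cayley_mulVec_le hQ (hskew z) (hskew z₁) y₀
    _ ≤ 2 * ((h / 2) * (L * qnorm Q (z - z₁))) * qnorm Q y₀ := by
        have := qnorm_nonneg Q y₀
        gcongr
        calc _ ≤ |h / 2| * qOpNorm Q (J z * Q - J z₁ * Q) := qOpNorm_smul_le hQ _ _
          _ ≤ (h / 2) * (L * qnorm Q (z - z₁)) := by
            rw [abs_of_pos (by positivity)]; gcongr; exact hLip z z₁
    _ = (h * L * qnorm Q y₀ / 2) * qnorm Q (x - y₁) := by rw [hmid]; ring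

/-- Cayley iterates: if `y₁` is the midpoint-rule solution (fixed point of
`Φ_h`) and `J·Q` is `L`-Lipschitz w.r.t. the `Q`-norms, then for any `x` the
Cayley iterate `w = Φ_h(x)` satisfies
`‖w - y₁‖_Q ≤ (hL‖y₀‖_Q/2)‖x - y₁‖_Q` and `‖w‖_Q = ‖y₀‖_Q`. -/
theorem stmt19 {n : ℕ} (Q : Matrix (Fin n) (Fin n) ℝ) (hQ : Q.PosDef)
    (J : (Fin n → ℝ) → Matrix (Fin n) (Fin n) ℝ) (hJcont : Continuous J)
    (hJ : ∀ z, (J z)ᵀ = -(J z))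
    (L : ℝ)
    (hLip : ∀ z z' : Fin n → ℝ,
      qOpNorm Q (J z * Q - J z' * Q) ≤ L * qnorm Q (z - z'))
    (y₀ y₁ : Fin n → ℝ) (h : ℝ) (hh : 0 < h)
    (hy₁ : y₁ = Phi Q J y₀ h y₁) :
    ∀ x : Fin n → ℝ,
      qnorm Q (Phi Q J y₀ h x - y₁) ≤ (h * L * qnorm Q y₀ / 2) * qnorm Q (x - y₁) ∧
      qnorm Q (Phi Q J y₀ h x) = qnorm Q y₀ :=
  stmt19_general Q hQ J hJ L hLip y₀ y₁ h hh hy₁
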